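/- If α is an interval t-coloring of the n-dimensional hypercube Q_n, then t ≤ n(n+1)/2. Consequently W(Q_n) ≤ n(n+1)/2. -/

import Mathlib

open SimpleGraph

/-- `c` is an interval `t`-coloring of `G`: a proper edge-coloring with colors
`1,…,t`, every color used, and for each vertex the incident colors form an
interval of consecutive integers. -/
def IsIntervalColoring {V : Type*} (G : SimpleGraph V) (t : ℕ) (c : Sym2 V → ℕ) : Prop :=
  (∀ e ∈ G.edgeSet, c e ∈ Finset.Icc 1 t) ∧
  (∀ e₁ ∈ G.edgeSet, ∀ e₂ ∈ G.edgeSet, e₁ ≠ e₂ → (∃ v, v ∈ e₁ ∧ v ∈ e₂) → c e₁ ≠ c e₂) ∧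
  (∀ k ∈ Finset.Icc 1 t, ∃ e ∈ G.edgeSet, c e = k) ∧
  (∀ v : V, ∀ k₁ k₂ k : ℕ,
    (∃ e ∈ G.edgeSet, v ∈ e ∧ c e = k₁) → (∃ e ∈ G.edgeSet, v ∈ e ∧ c e = k₂) →
      k₁ ≤ k → k ≤ k₂ → ∃ e ∈ G.edgeSet, v ∈ e ∧ c e = k)

def HasIntervalColoring {V : Type*} (G : SimpleGraph V) (t : ℕ) : Prop :=
  ∃ c : Sym2 V → ℕ, IsIntervalColoring G t c

/-- `W G`: the greatest number of colors in an interval coloring of `G`. -/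
noncomputable def Wsup {V : Type*} (G : SimpleGraph V) : ℕ :=
  sSup {t | HasIntervalColoring G t}

/-- `w G`: the least number of colors in an interval coloring of `G`. -/
noncomputable def wlow {V : Type*} (G : SimpleGraph V) : ℕ :=
  sInf {t | HasIntervalColoring G t}

/-- The `n`-dimensional hypercube `Q_n`. -/
def hypercube (n : ℕ) : SimpleGraph (Fin n → Bool) where
  Adj u v := ∃! i, u i ≠ v i
  symm := by
    refine ⟨?_⟩
    rintro u v ⟨i, hi, hu⟩
    exact ⟨i, fun h => hi h.symm, fun j hj => hu j fun h => hj h.symm⟩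
  loopless := by refine ⟨?_⟩; rintro u ⟨i, hi, -⟩; exact hi rfl

namespace HypercubeAux

variable {n : ℕ}

/-- Flip the `i`-th coordinate. -/
def flipv (i : Fin n) (v : Fin n → Bool) : Fin n → Bool := Function.update v i (!v i)

lemma flipv_apply_self (i : Fin n) (v : Fin n → Bool) : flipv i v i = !v i := by
  simp [flipv]

lemma flipv_apply_ne {i j : Fin n} (h : j ≠ i) (v : Fin n → Bool) : flipv i v j = v j := by
  simp [flipv, Function.update_of_ne h]

lemma adj_flipv (i : Fin n) (v : Fin n → Bool) : (hypercube n).Adj v (flipv i v) := by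
  refine ⟨i, by simp [flipv], fun j hj => ?_⟩
  by_contra hji
  exact hj (flipv_apply_ne hji v).symm

lemma adj_eq_flipv {v w : Fin n → Bool} (h : (hypercube n).Adj v w) : ∃ i, w = flipv i v := by
  obtain ⟨i, hi, hu⟩ := h
  refine ⟨i, funext fun j => ?_⟩
  by_cases hj : j = i
  · subst hj
    rw [flipv_apply_self]
    revert hi; cases v j <;> cases w j <;> simp
  · by_cases hw : v j = w j
    · rw [← hw, flipv_apply_ne hj]
    · exact absurd (hu j fun hh => hw hh) hj

lemma flipv_inj {i j : Fin n} {v : Fin n → Bool} (h : flipv i v = flipv j v) : i = j := by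
  by_contra hij
  have h2 := congrFun h i
  rw [flipv_apply_self, flipv_apply_ne hij] at h2
  simp at h2

/-- The spectrum (set of colors incident to `v`). -/
def spec (c : Sym2 (Fin n → Bool) → ℕ) (v : Fin n → Bool) : Finset ℕ :=
  Finset.image (fun i => c s(v, flipv i v)) Finset.univ

lemma spec_nonempty (hn : 0 < n) (c : Sym2 (Fin n → Bool) → ℕ) (v : Fin n → Bool) :
    (spec c v).Nonempty :=
  ⟨c s(v, flipv ⟨0, hn⟩ v), Finset.mem_image.mpr ⟨⟨0, hn⟩, Finset.mem_univ _, rfl⟩⟩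

/-- The minimum color at a vertex. -/
noncomputable def mmin (hn : 0 < n) (c : Sym2 (Fin n → Bool) → ℕ) (v : Fin n → Bool) : ℕ :=
  (spec c v).min' (spec_nonempty hn c v)

lemma mmin_mem (hn : 0 < n) (c : Sym2 (Fin n → Bool) → ℕ) (v : Fin n → Bool) :
    mmin hn c v ∈ spec c v :=
  (spec c v).min'_mem (spec_nonempty hn c v)

lemma mmin_le (hn : 0 < n) {c : Sym2 (Fin n → Bool) → ℕ} {v : Fin n → Bool} {k : ℕ}
    (hk : k ∈ spec c v) : mmin hn c v ≤ k :=
  (spec c v).min'_le k hk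

lemma edge_cases {e : Sym2 (Fin n → Bool)} (he : e ∈ (hypercube n).edgeSet)
    {v : Fin n → Bool} (hv : v ∈ e) : ∃ i, e = s(v, flipv i v) := by
  induction e using Sym2.ind with
  | _ a b =>
    rw [SimpleGraph.mem_edgeSet] at he
    rw [Sym2.mem_iff] at hv
    rcases hv with rfl | rfl
    · obtain ⟨i, hi⟩ := adj_eq_flipv he
      exact ⟨i, by rw [hi]⟩
    · obtain ⟨i, hi⟩ := adj_eq_flipv he.symm
      exact ⟨i, by rw [hi, Sym2.eq_swap]⟩

lemma mem_spec {c : Sym2 (Fin n → Bool) → ℕ} {v : Fin n → Bool} {k : ℕ} :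
    k ∈ spec c v ↔ ∃ e ∈ (hypercube n).edgeSet, v ∈ e ∧ c e = k := by
  constructor
  · intro hk
    obtain ⟨i, -, rfl⟩ := Finset.mem_image.mp hk
    exact ⟨s(v, flipv i v), (hypercube n).mem_edgeSet.mpr (adj_flipv i v),
      Sym2.mem_mk_left _ _, rfl⟩
  · rintro ⟨e, he, hve, rfl⟩
    obtain ⟨i, rfl⟩ := edge_cases he hve
    exact Finset.mem_image.mpr ⟨i, Finset.mem_univ _, rfl⟩

variable {t : ℕ} {c : Sym2 (Fin n → Bool) → ℕ}

lemma color_inj (hc : IsIntervalColoring (hypercube n) t c) (v : Fin n → Bool) :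
    Function.Injective (fun i : Fin n => c s(v, flipv i v)) := by
  intro i j hij
  by_contra hne
  have h1 : s(v, flipv i v) ∈ (hypercube n).edgeSet :=
    (hypercube n).mem_edgeSet.mpr (adj_flipv i v)
  have h2 : s(v, flipv j v) ∈ (hypercube n).edgeSet :=
    (hypercube n).mem_edgeSet.mpr (adj_flipv j v)
  have hedge : s(v, flipv i v) ≠ s(v, flipv j v) := fun h =>
    hne (flipv_inj (Sym2.congr_right.mp h))
  exact hc.2.1 _ h1 _ h2 hedge ⟨v, Sym2.mem_mk_left _ _, Sym2.mem_mk_left _ _⟩ hij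

lemma card_spec (hc : IsIntervalColoring (hypercube n) t c) (v : Fin n → Bool) :
    (spec c v).card = n := by
  rw [spec, Finset.card_image_of_injective _ (color_inj hc v), Finset.card_univ,
    Fintype.card_fin]

lemma spec_bounds (hc : IsIntervalColoring (hypercube n) t c) (hn : 0 < n)
    (v : Fin n → Bool) {k : ℕ} (hk : k ∈ spec c v) :
    k + 1 ≤ mmin hn c v + n := by
  by_contra hlt
  push_neg at hlt
  have hsub : Finset.Icc (mmin hn c v) k ⊆ spec c v := by
    intro x hx
    rw [Finset.mem_Icc] at hx
    exact mem_spec.mpr (hc.2.2.2 v _ _ x (mem_spec.mp (mmin_mem hn c v))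
      (mem_spec.mp hk) hx.1 hx.2)
  have hcard : (Finset.Icc (mmin hn c v) k).card ≤ (spec c v).card :=
    Finset.card_le_card hsub
  rw [Nat.card_Icc, card_spec hc v] at hcard
  omega

lemma step (hc : IsIntervalColoring (hypercube n) t c) (hn : 0 < n)
    (v : Fin n → Bool) (D : Finset (Fin n)) (hD : D.Nonempty) :
    ∃ d ∈ D, mmin hn c v + D.card ≤ mmin hn c (flipv d v) + n := by
  classical
  set F := D.image (fun i => c s(v, flipv i v)) with hF
  have hFne : F.Nonempty := hD.image _
  have hFcard : F.card = D.card := Finset.card_image_of_injective _ (color_inj hc v)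
  have hFpos : 0 < F.card := Finset.card_pos.mpr hFne
  obtain ⟨d, hd, hdval⟩ := Finset.mem_image.mp (F.max'_mem hFne)
  refine ⟨d, hd, ?_⟩
  have hFsub2 : F ⊆ Finset.Icc (mmin hn c v) (F.max' hFne) := by
    intro x hx
    refine Finset.mem_Icc.mpr ⟨mmin_le hn ?_, F.le_max' x hx⟩
    obtain ⟨i, -, rfl⟩ := Finset.mem_image.mp hx
    exact Finset.mem_image.mpr ⟨i, Finset.mem_univ _, rfl⟩
  have hcardle : F.card ≤ F.max' hFne + 1 - mmin hn c v := by
    have h' := Finset.card_le_card hFsub2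
    rwa [Nat.card_Icc] at h'
  have hmem : F.max' hFne ∈ spec c (flipv d v) :=
    mem_spec.mpr ⟨s(v, flipv d v), (hypercube n).mem_edgeSet.mpr (adj_flipv d v),
      Sym2.mem_mk_right _ _, hdval⟩
  have hub := spec_bounds hc hn (flipv d v) hmem
  omega

lemma main_ind (hc : IsIntervalColoring (hypercube n) t c) (hn : 0 < n) :
    ∀ k (u v : Fin n → Bool),
      (Finset.univ.filter (fun i => u i ≠ v i)).card = k →
      mmin hn c u ≤ mmin hn c v + ∑ j ∈ Finset.range k, (n - 1 - j) := by
  intro k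
  induction k with
  | zero =>
    intro u v h
    have huv : u = v := by
      funext i
      by_contra hi
      have hmem : i ∈ Finset.univ.filter (fun i => u i ≠ v i) :=
        Finset.mem_filter.mpr ⟨Finset.mem_univ _, hi⟩
      rw [Finset.card_eq_zero.mp h] at hmem
      exact absurd hmem (Finset.notMem_empty i)
    subst huv; simp
  | succ k ih =>
    intro u v h
    set D := Finset.univ.filter (fun i => u i ≠ v i) with hD
    have hDne : D.Nonempty := Finset.card_pos.mp (by rw [h]; exact Nat.succ_pos k)
    obtain ⟨d, hd, hstep⟩ := step hc hn u D hDne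
    have hdne : u d ≠ v d := (Finset.mem_filter.mp hd).2
    have hfilter : Finset.univ.filter (fun i => flipv d u i ≠ v i) = D.erase d := by
      ext i
      rw [Finset.mem_erase, Finset.mem_filter, Finset.mem_filter]
      constructor
      · rintro ⟨-, hi⟩
        by_cases hid : i = d
        · subst hid
          rw [flipv_apply_self] at hi
          exfalso
          revert hi hdne; cases u i <;> cases v i <;> simp
        · rw [flipv_apply_ne hid] at hi
          exact ⟨hid, Finset.mem_univ _, hi⟩
      · rintro ⟨hid, -, hi⟩
        exact ⟨Finset.mem_univ _, by rw [flipv_apply_ne hid]; exact hi⟩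
    have hcard' : (Finset.univ.filter (fun i => flipv d u i ≠ v i)).card = k := by
      rw [hfilter, Finset.card_erase_of_mem hd, h]
      rfl
    have hih := ih (flipv d u) v hcard'
    have hkn : k + 1 ≤ n := by
      have h' := Finset.card_le_univ D
      rw [h] at h'
      simpa using h'
    rw [Finset.sum_range_succ]
    rw [h] at hstep
    omega

end HypercubeAux

open HypercubeAux in
theorem stmt3 (n : ℕ) :
    (∀ t, HasIntervalColoring (hypercube n) t → t ≤ n * (n + 1) / 2) ∧
    Wsup (hypercube n) ≤ n * (n + 1) / 2 := by
  have key : ∀ t, HasIntervalColoring (hypercube n) t → t ≤ n * (n + 1) / 2 := by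
    rintro t ⟨c, hc⟩
    rcases Nat.eq_zero_or_pos t with rfl | ht
    · exact Nat.zero_le _
    rcases Nat.eq_zero_or_pos n with rfl | hn
    · exfalso
      obtain ⟨e, he, -⟩ := hc.2.2.1 t (Finset.mem_Icc.mpr ⟨ht, le_refl t⟩)
      induction e using Sym2.ind with
      | _ a b =>
        obtain ⟨i, -, -⟩ := (hypercube 0).mem_edgeSet.mp he
        exact i.elim0
    · -- main case
      obtain ⟨e₁, he₁, hce₁⟩ := hc.2.2.1 t (Finset.mem_Icc.mpr ⟨ht, le_refl t⟩)
      obtain ⟨e₂, he₂, hce₂⟩ := hc.2.2.1 1 (Finset.mem_Icc.mpr ⟨le_refl 1, ht⟩)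
      obtain ⟨a, ha⟩ : ∃ a, a ∈ e₁ := by
        induction e₁ using Sym2.ind with
        | _ x y => exact ⟨x, Sym2.mem_mk_left _ _⟩
      obtain ⟨b, hb⟩ : ∃ b, b ∈ e₂ := by
        induction e₂ using Sym2.ind with
        | _ x y => exact ⟨x, Sym2.mem_mk_left _ _⟩
      have hta : t ∈ spec c a := mem_spec.mpr ⟨e₁, he₁, ha, hce₁⟩
      have h1b : (1 : ℕ) ∈ spec c b := mem_spec.mpr ⟨e₂, he₂, hb, hce₂⟩
      have h1 : t + 1 ≤ mmin hn c a + n := spec_bounds hc hn a hta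
      have h2 : mmin hn c b ≤ 1 := mmin_le hn h1b
      have h3 := main_ind hc hn ((Finset.univ.filter (fun i => a i ≠ b i)).card) a b rfl
      have hkn : (Finset.univ.filter (fun i => a i ≠ b i)).card ≤ n := by
        have h' := Finset.card_le_univ (Finset.univ.filter (fun i => a i ≠ b i))
        simpa using h'
      have hsumle : ∑ j ∈ Finset.range ((Finset.univ.filter (fun i => a i ≠ b i)).card),
          (n - 1 - j) ≤ ∑ j ∈ Finset.range n, (n - 1 - j) :=
        Finset.sum_le_sum_of_subset (Finset.range_subset_range.mpr hkn)
      have hgauss : (∑ j ∈ Finset.range n, (n - 1 - j)) * 2 = n * (n - 1) := by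
        rw [Finset.sum_range_reflect (fun j => j) n]
        exact Finset.sum_range_id_mul_two n
      have htle : t ≤ n + (∑ j ∈ Finset.range n, (n - 1 - j)) := by omega
      rw [Nat.le_div_iff_mul_le (by norm_num : 0 < 2)]
      have hmul : (n + (∑ j ∈ Finset.range n, (n - 1 - j))) * 2 = n * (n + 1) := by
        have h2n : n * (n - 1) + 2 * n = n * (n + 1) := by
          cases n with
          | zero => rfl
          | succ m => simp [Nat.succ_sub_one]; ring
        omega
      calc t * 2 ≤ (n + (∑ j ∈ Finset.range n, (n - 1 - j))) * 2 :=
            Nat.mul_le_mul_right 2 htle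
        _ = n * (n + 1) := hmul
  refine ⟨key, ?_⟩
  by_cases h : {t | HasIntervalColoring (hypercube n) t}.Nonempty
  · exact csSup_le h key
  · rw [Wsup, Set.not_nonempty_iff_eq_empty.mp h, csSup_empty]
    exact bot_le
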